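/- Let f be a nonconstant map in C(Σ, M). Then the ℂ*-orbit of f, namely the set { f ∘ g_a : a ∈ ℂ, a ≠ 0 }, is a closed subset of the subspace of nonconstant maps in C(Σ, M): if h_n = f ∘ g_{a_n} converges uniformly to a nonconstant map f₂ ∈ C(Σ, M), then f₂ = f ∘ g_a for some nonzero a ∈ ℂ. -/

import Mathlib

open OnePoint Filter Topology

/-!
Pass to an ultrafilter along which the parameters `aₙ` converge in the sphere, to some `α`.
For `z ≠ 0` we have `g_{aₙ} z = g_z aₙ → g_z α`, so `f₂ z = f (g_z α)` on the dense set `ℂ*`.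
If `α = 0` or `α = ∞` this value does not depend on `z`, so `f₂` is constant; otherwise
`f (g_z α) = f (g_α z)` and `f₂ = f ∘ g_α`.
-/

/-- The reparametrization `g_a : Σ → Σ` of the Riemann sphere `Σ = OnePoint ℂ`
extending `z ↦ a · z` on `ℂ` and fixing the point at infinity. -/
noncomputable def gA (a : ℂ) (ha : a ≠ 0) : C(OnePoint ℂ, OnePoint ℂ) where
  toFun := OnePoint.map (fun z => a * z)
  continuous_toFun := (Homeomorph.onePointCongr (Homeomorph.mulLeft₀ a ha)).continuous

theorem gA_coe (a : ℂ) (ha : a ≠ 0) (z : ℂ) : gA a ha z = ((a * z : ℂ) : OnePoint ℂ) := rfl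

theorem gA_infty (a : ℂ) (ha : a ≠ 0) : gA a ha ∞ = ∞ := rfl

theorem gA_coe_comm {a z : ℂ} (ha : a ≠ 0) (hz : z ≠ 0) : gA a ha z = gA z hz a := by
  rw [gA_coe, gA_coe, mul_comm]

theorem dense_image_coe_ne_zero : Dense ((↑) '' {z : ℂ | z ≠ 0} : Set (OnePoint ℂ)) :=
  denseRange_coe.dense_image continuous_coe (dense_compl_singleton 0)

theorem ContinuousMap.eq_of_forall_coe_ne_zero {X : Type*} [TopologicalSpace X] [T2Space X]
    {f g : C(OnePoint ℂ, X)} (h : ∀ z : ℂ, z ≠ 0 → f z = g z) : f = g :=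
  DFunLike.coe_injective <| f.continuous.ext_on dense_image_coe_ne_zero g.continuous <| by
    rintro _ ⟨z, hz, rfl⟩
    exact h z hz

theorem tendsto_gA_apply_coe {ι : Type*} {l : Filter ι} {a : ι → ℂ} (ha : ∀ i, a i ≠ 0)
    {α : OnePoint ℂ} (hα : Tendsto (fun i => (a i : OnePoint ℂ)) l (𝓝 α)) {z : ℂ} (hz : z ≠ 0) :
    Tendsto (fun i => gA (a i) (ha i) z) l (𝓝 (gA z hz α)) := by
  simpa only [gA_coe_comm (ha _) hz, Function.comp_def] using
    ((gA z hz).continuous.tendsto α).comp hα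

theorem exists_ultrafilter_le_tendsto {ι X : Type*} [TopologicalSpace X] [CompactSpace X]
    (l : Filter ι) [l.NeBot] (v : ι → X) :
    ∃ (U : Ultrafilter ι) (x : X), ↑U ≤ l ∧ Tendsto v U (𝓝 x) := by
  obtain ⟨x, -, hx⟩ := isCompact_univ.ultrafilter_le_nhds ((Ultrafilter.of l).map v) (by simp)
  exact ⟨Ultrafilter.of l, x, Ultrafilter.of_le l, hx⟩

theorem orbit_closed_in_nonconstant_general {M : Type*} [MetricSpace M] [CompactSpace M]
    (f : C(OnePoint ℂ, M)) (f₂ : C(OnePoint ℂ, M))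
    (hf₂ : ∃ x y, f₂ x ≠ f₂ y)
    (hcl : f₂ ∈ closure {k : C(OnePoint ℂ, M) | ∃ (a : ℂ) (ha : a ≠ 0), k = f.comp (gA a ha)}) :
    ∃ (a : ℂ) (ha : a ≠ 0), f₂ = f.comp (gA a ha) := by
  obtain ⟨u, hu, hlim⟩ := mem_closure_iff_seq_limit.mp hcl
  choose a ha hu using hu
  obtain ⟨U, α, hUle, hα⟩ := exists_ultrafilter_le_tendsto atTop fun n => (a n : OnePoint ℂ)
  have hf₂_coe (z : ℂ) (hz : z ≠ 0) : f₂ z = f (gA z hz α) := by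
    refine tendsto_nhds_unique
      (((continuous_eval_const _).tendsto f₂).comp (hlim.mono_left hUle)) ?_
    simpa only [Function.comp_def, hu, ContinuousMap.comp_apply] using
      (f.continuous.tendsto _).comp (tendsto_gA_apply_coe ha hα hz)
  have hf₂_ne_const (m : M) : f₂ ≠ ContinuousMap.const _ m := by
    obtain ⟨x, y, hxy⟩ := hf₂
    rintro rfl
    exact hxy rfl
  induction α using OnePoint.rec with
  | infty =>
    exact absurd (ContinuousMap.eq_of_forall_coe_ne_zero fun z hz => by
      rw [hf₂_coe z hz, gA_infty, ContinuousMap.const_apply]) (hf₂_ne_const (f ∞))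
  | coe c =>
    rcases eq_or_ne c 0 with rfl | hc
    · exact absurd (ContinuousMap.eq_of_forall_coe_ne_zero fun z hz => by
        rw [hf₂_coe z hz, gA_coe, mul_zero, ContinuousMap.const_apply]) (hf₂_ne_const (f (0 : ℂ)))
    · exact ⟨c, hc, ContinuousMap.eq_of_forall_coe_ne_zero fun z hz => by
        rw [hf₂_coe z hz, ← gA_coe_comm hc hz, ContinuousMap.comp_apply]⟩

/-- For a nonconstant continuous map `f : Σ → M`, the `ℂ*`-orbit of `f` is closed in the
subspace of nonconstant maps: any nonconstant uniform limit of reparametrizations of `f`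
is itself a reparametrization of `f`. -/
theorem orbit_closed_in_nonconstant {M : Type*} [MetricSpace M] [CompactSpace M]
    (f : C(OnePoint ℂ, M)) (hf : ∃ x y, f x ≠ f y) (f₂ : C(OnePoint ℂ, M))
    (hf₂ : ∃ x y, f₂ x ≠ f₂ y)
    (hcl : f₂ ∈ closure {k : C(OnePoint ℂ, M) | ∃ (a : ℂ) (ha : a ≠ 0), k = f.comp (gA a ha)}) :
    ∃ (a : ℂ) (ha : a ≠ 0), f₂ = f.comp (gA a ha) :=
  orbit_closed_in_nonconstant_general f f₂ hf₂ hcl
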